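/- arXiv:2011.07278 — 5 statements merged into one kernel-verified Lean document; each statement's English description precedes it below -/
import Mathlib

section
/- Let Ψ be a series-parallel expression in which each variable occurs at most once, with n variables, α the SP-order it generates, and α* the SP-order generated by the dual expression Ψ* obtained by swapping all series and parallel operations. Then the number of linear extensions of α times the number of linear extensions of α* equals n!. -/
/-- Series-parallel expressions: each leaf is a distinct variable. -/
inductive SP where
  | leaf : SP
  | ser : SP → SP → SP
  | par : SP → SP → SP

/-- The set of elements (variables) of an SP-expression. -/
def SP.carrier : SP → Type
  | .leaf => Unit
  | .ser a b => a.carrier ⊕ b.carrier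
  | .par a b => a.carrier ⊕ b.carrier

/-- The partial order generated by an SP-expression. -/
def SP.le : (s : SP) → s.carrier → s.carrier → Prop
  | .leaf, _, _ => True
  | .ser a _, .inl x, .inl y => a.le x y
  | .ser _ b, .inr x, .inr y => b.le x y
  | .ser _ _, .inl _, .inr _ => True
  | .ser _ _, .inr _, .inl _ => False
  | .par a _, .inl x, .inl y => a.le x y
  | .par _ b, .inr x, .inr y => b.le x y
  | .par _ _, .inl _, .inr _ => False
  | .par _ _, .inr _, .inl _ => False

/-- Number of variables of an SP-expression. -/
def SP.size : SP → ℕ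
  | .leaf => 1
  | .ser a b => a.size + b.size
  | .par a b => a.size + b.size

instance SP.fintypeCarrier : (s : SP) → Fintype s.carrier
  | .leaf => inferInstanceAs (Fintype Unit)
  | .ser a b =>
      letI := fintypeCarrier a; letI := fintypeCarrier b
      inferInstanceAs (Fintype (a.carrier ⊕ b.carrier))
  | .par a b =>
      letI := fintypeCarrier a; letI := fintypeCarrier b
      inferInstanceAs (Fintype (a.carrier ⊕ b.carrier))

/-- Dual expression: interchange series and parallel. -/
def SP.dual : SP → SP
  | .leaf => .leaf
  | .ser a b => .par a.dual b.dual
  | .par a b => .ser a.dual b.dual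

/-- The canonical identification of elements of `s` with elements of `s.dual`. -/
def SP.dualEquiv : (s : SP) → s.carrier ≃ s.dual.carrier
  | .leaf => Equiv.refl _
  | .ser a b => Equiv.sumCongr a.dualEquiv b.dualEquiv
  | .par a b => Equiv.sumCongr a.dualEquiv b.dualEquiv

/-- Number of linear extensions of (the strict part of) relation `le` on a finite set `X`:
bijections to `{1,…,n}` strictly monotone with respect to the order. -/
noncomputable def linExtCount (X : Type) [Fintype X] (le : X → X → Prop) : ℕ :=
  Nat.card {f : X ≃ Fin (Fintype.card X) // ∀ x y : X, le x y → x ≠ y → f x < f y}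

/-- Number of linear extensions of the poset generated by an SP-expression. -/
noncomputable def SP.numLE (s : SP) : ℕ := linExtCount s.carrier s.le

/-! Writing `e(P)` for the number of linear extensions, `e(P ⊗ Q) = e(P) e(Q)` while
`e(P ∥ Q) = C(p + q, p) e(P) e(Q)` for `|P| = p`, `|Q| = q`: a linear extension of a sum is a
shuffle of linear extensions of its summands, and the shuffle must put all of `P` first in the
series case but is arbitrary in the parallel case. Dualizing exchanges the two rules, so by
induction `e(Ψ) e(Ψ*) = C(p + q, p) p! q! = (p + q)!`. Shuffles of `Fin k` and `Fin m` are encoded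
as linear extensions of the sum of two chains, and the series shuffle is unique because that sum
is then total. -/

section LinearExtensions

variable {X A B : Type} {n k m : ℕ}

def IsLinExt (r : X → X → Prop) (f : X ≃ Fin n) : Prop :=
  ∀ x y, r x y → x ≠ y → f x < f y

/-- Series composition is `sumRel True`, parallel composition `sumRel False`. -/
def sumRel (c : Prop) (r : A → A → Prop) (s : B → B → Prop) : A ⊕ B → A ⊕ B → Prop
  | .inl x, .inl y => r x y
  | .inr x, .inr y => s x y
  | .inl _, .inr _ => c
  | .inr _, .inl _ => False

theorem linExtCount_eq_factorial [Fintype X] {r : X → X → Prop} (hr : ∀ x y, r x y → x = y) :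
    linExtCount X r = (Fintype.card X).factorial := by
  classical
  rw [linExtCount,
    Nat.card_congr (Equiv.subtypeUnivEquiv fun _ x y hxy hne => (hne (hr x y hxy)).elim),
    Nat.card_eq_fintype_card, Fintype.card_equiv (Fintype.equivFin X)]

theorem subsingleton_isLinExt_of_total {r : X → X → Prop}
    (hr : ∀ x y, x ≠ y → r x y ∨ r y x) : Subsingleton {f : X ≃ Fin n // IsLinExt r f} := by
  refine ⟨fun ⟨f, hf⟩ ⟨f', hf'⟩ => Subtype.ext ?_⟩
  have hmono : StrictMono (f' ∘ f.symm) := by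
    intro i j hij
    have hne : f.symm i ≠ f.symm j := f.symm.injective.ne hij.ne
    rcases hr _ _ hne with hxy | hyx
    · exact hf' _ _ hxy hne
    · exact absurd (by simpa using hf _ _ hyx hne.symm) hij.not_gt
  have hid : f' ∘ f.symm = id :=
    (hmono.range_inj strictMono_id).mp (by simp [Set.range_comp])
  exact Equiv.ext fun x => by simpa using (congrFun hid (f x)).symm

theorem IsLinExt.strictMono_inl {c : Prop} {e : Fin k ⊕ Fin m ≃ Fin n}
    (he : IsLinExt (sumRel c (· < ·) (· < ·)) e) : StrictMono (e ∘ Sum.inl) :=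
  fun _ _ hij => he (.inl _) (.inl _) hij (Sum.inl_injective.ne hij.ne)

theorem IsLinExt.strictMono_inr {c : Prop} {e : Fin k ⊕ Fin m ≃ Fin n}
    (he : IsLinExt (sumRel c (· < ·) (· < ·)) e) : StrictMono (e ∘ Sum.inr) :=
  fun _ _ hij => he (.inr _) (.inr _) hij (Sum.inr_injective.ne hij.ne)

end LinearExtensions

section Decomposition

variable {A B : Type} {k m n : ℕ} {c : Prop}
  {r : A → A → Prop} {s : B → B → Prop}

theorem exists_equiv_fin_strictMono {X β : Type*} [Fintype X] [LinearOrder β] {u : X → β}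
    (hu : Function.Injective u) : ∃ g : X ≃ Fin (Fintype.card X), StrictMono (u ∘ g.symm) := by
  let g₀ := Fintype.equivFin X
  exact ⟨g₀.trans (Tuple.sort (u ∘ g₀.symm)).symm,
    (Tuple.monotone_sort (u ∘ g₀.symm)).strictMono_of_injective
      (hu.comp (g₀.symm.injective.comp (Tuple.sort _).injective))⟩

theorem StrictMono.eq_and_eq_of_comp_equiv {X α β : Type*} [LinearOrder α] [WellFoundedLT α]
    [Preorder β] {u v : α → β} (hu : StrictMono u) (hv : StrictMono v) {g g' : X ≃ α}
    (h : u ∘ g = v ∘ g') : u = v ∧ g = g' := by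
  obtain rfl : u = v := (hu.range_inj hv).mp <| by
    rw [← g.surjective.range_comp, h, g'.surjective.range_comp]
  exact ⟨rfl, Equiv.ext fun x => hu.injective (congrFun h x)⟩

theorem IsLinExt.sumCongr_trans {e : Fin k ⊕ Fin m ≃ Fin n} {g : A ≃ Fin k} {h : B ≃ Fin m}
    (he : IsLinExt (sumRel c (· < ·) (· < ·)) e) (hg : IsLinExt r g) (hh : IsLinExt s h) :
    IsLinExt (sumRel c r s) ((Equiv.sumCongr g h).trans e) := by
  rintro (x | x) (y | y) hxy hne
  · exact he.strictMono_inl (hg x y hxy (ne_of_apply_ne _ hne))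
  · exact he (.inl (g x)) (.inr (h y)) hxy Sum.inl_ne_inr
  · exact hxy.elim
  · exact he.strictMono_inr (hh x y hxy (ne_of_apply_ne _ hne))

theorem eq_of_sumCongr_trans_eq {e e' : Fin k ⊕ Fin m ≃ Fin n} {g g' : A ≃ Fin k}
    {h h' : B ≃ Fin m} (he : IsLinExt (sumRel c (· < ·) (· < ·)) e)
    (he' : IsLinExt (sumRel c (· < ·) (· < ·)) e')
    (heq : (Equiv.sumCongr g h).trans e = (Equiv.sumCongr g' h').trans e') :
    e = e' ∧ g = g' ∧ h = h' := by
  obtain ⟨hl, rfl⟩ := he.strictMono_inl.eq_and_eq_of_comp_equiv he'.strictMono_inl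
    (funext fun x => congrFun (congrArg DFunLike.coe heq) (.inl x))
  obtain ⟨hr, rfl⟩ := he.strictMono_inr.eq_and_eq_of_comp_equiv he'.strictMono_inr
    (funext fun y => congrFun (congrArg DFunLike.coe heq) (.inr y))
  refine ⟨Equiv.ext ?_, rfl, rfl⟩
  rintro (i | j)
  · exact congrFun hl i
  · exact congrFun hr j

variable [Fintype A] [Fintype B]

theorem IsLinExt.exists_sumCongr_trans {f : A ⊕ B ≃ Fin n} (hf : IsLinExt (sumRel c r s) f) :
    ∃ (e : Fin (Fintype.card A) ⊕ Fin (Fintype.card B) ≃ Fin n) (g : A ≃ Fin (Fintype.card A))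
      (h : B ≃ Fin (Fintype.card B)), IsLinExt (sumRel c (· < ·) (· < ·)) e ∧ IsLinExt r g ∧
        IsLinExt s h ∧ (Equiv.sumCongr g h).trans e = f := by
  obtain ⟨g, hg⟩ := exists_equiv_fin_strictMono (f.injective.comp Sum.inl_injective)
  obtain ⟨h, hh⟩ := exists_equiv_fin_strictMono (f.injective.comp Sum.inr_injective)
  refine ⟨(Equiv.sumCongr g h).symm.trans f, g, h, ?_, ?_, ?_, by ext; simp⟩
  · rintro (i | i) (j | j) hij -
    · exact hg hij
    · exact hf _ _ hij (by simp)
    · exact hij.elim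
    · exact hh hij
  · intro x y hxy _
    exact hg.lt_iff_lt.mp (by simpa using hf (.inl x) (.inl y) hxy (by simpa))
  · intro x y hxy _
    exact hh.lt_iff_lt.mp (by simpa using hf (.inr x) (.inr y) hxy (by simpa))

theorem card_isLinExt_sumRel :
    Nat.card {f : A ⊕ B ≃ Fin n // IsLinExt (sumRel c r s) f} =
      Nat.card {e : Fin (Fintype.card A) ⊕ Fin (Fintype.card B) ≃ Fin n //
        IsLinExt (sumRel c (· < ·) (· < ·)) e} * (linExtCount A r * linExtCount B s) := by
  rw [linExtCount, linExtCount, ← Nat.card_prod, ← Nat.card_prod]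
  refine (Nat.card_congr (Equiv.ofBijective
    (fun t => ⟨(Equiv.sumCongr t.2.1.1 t.2.2.1).trans t.1.1,
      t.1.2.sumCongr_trans t.2.1.2 t.2.2.2⟩) ⟨?_, ?_⟩)).symm
  · rintro ⟨⟨e, he⟩, ⟨g, hg⟩, ⟨h, hh⟩⟩ ⟨⟨e', he'⟩, ⟨g', hg'⟩, ⟨h', hh'⟩⟩ heq
    obtain ⟨rfl, rfl, rfl⟩ := eq_of_sumCongr_trans_eq he he' (congrArg Subtype.val heq)
    rfl
  · rintro ⟨f, hf⟩
    obtain ⟨e, g, h, he, hg, hh, rfl⟩ := hf.exists_sumCongr_trans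
    exact ⟨⟨⟨e, he⟩, ⟨g, hg⟩, ⟨h, hh⟩⟩, rfl⟩

theorem linExtCount_sumRel :
    linExtCount (A ⊕ B) (sumRel c r s) =
      Nat.card {e : Fin (Fintype.card A) ⊕ Fin (Fintype.card B) ≃
          Fin (Fintype.card A + Fintype.card B) // IsLinExt (sumRel c (· < ·) (· < ·)) e} *
        (linExtCount A r * linExtCount B s) := by
  rw [← Fintype.card_sum]
  exact card_isLinExt_sumRel

end Decomposition

section Shuffles

variable {A B : Type} [Fintype A] [Fintype B] {k m : ℕ} {r : A → A → Prop} {s : B → B → Prop}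

theorem card_isLinExt_sumRel_true_lt :
    Nat.card {e : Fin k ⊕ Fin m ≃ Fin (k + m) // IsLinExt (sumRel True (· < ·) (· < ·)) e} =
      1 := by
  have htotal : ∀ x y : Fin k ⊕ Fin m, x ≠ y →
      sumRel True (· < ·) (· < ·) x y ∨ sumRel True (· < ·) (· < ·) y x := by
    rintro (i | i) (j | j) hne
    · exact lt_or_gt_of_ne (ne_of_apply_ne _ hne)
    · exact .inl trivial
    · exact .inr trivial
    · exact lt_or_gt_of_ne (ne_of_apply_ne _ hne)
  refine Nat.card_eq_one_iff_unique.mpr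
    ⟨subsingleton_isLinExt_of_total htotal, ⟨finSumFinEquiv, ?_⟩⟩
  rintro (i | i) (j | j) hij -
  · exact Fin.strictMono_castAdd m hij
  · exact Fin.lt_def.mpr (Nat.lt_add_right j i.isLt)
  · exact hij.elim
  · exact Fin.strictMono_natAdd k hij

theorem card_isLinExt_sumRel_false_lt :
    Nat.card {e : Fin k ⊕ Fin m ≃ Fin (k + m) // IsLinExt (sumRel False (· < ·) (· < ·)) e} =
      (k + m).choose m := by
  -- count the linear extensions of the antichain on `Fin k ⊕ Fin m` in two ways
  have hantichain := linExtCount_sumRel (A := Fin k) (B := Fin m) (c := False)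
    (r := fun _ _ => False) (s := fun _ _ => False)
  rw [linExtCount_eq_factorial (by rintro (_ | _) (_ | _) ⟨⟩),
    linExtCount_eq_factorial (fun _ _ => False.elim),
    linExtCount_eq_factorial (fun _ _ => False.elim)] at hantichain
  rw [Fintype.card_sum, Fintype.card_fin, Fintype.card_fin] at hantichain
  refine Nat.eq_of_mul_eq_mul_right (by positivity : 0 < k.factorial * m.factorial) ?_
  exact hantichain.symm.trans (by rw [← mul_assoc, Nat.add_choose_mul_factorial_mul_factorial])

theorem linExtCount_sumRel_true :
    linExtCount (A ⊕ B) (sumRel True r s) = linExtCount A r * linExtCount B s := by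
  rw [linExtCount_sumRel, card_isLinExt_sumRel_true_lt, one_mul]

theorem linExtCount_sumRel_false :
    linExtCount (A ⊕ B) (sumRel False r s) =
      (Fintype.card A + Fintype.card B).choose (Fintype.card B) *
        (linExtCount A r * linExtCount B s) := by
  rw [linExtCount_sumRel, card_isLinExt_sumRel_false_lt]

end Shuffles

namespace SP

theorem card_carrier (s : SP) : Fintype.card s.carrier = s.size := by
  induction s with
  | leaf => rfl
  | ser a b iha ihb | par a b iha ihb => exact (Fintype.card_sum ..).trans (by rw [iha, ihb]; rfl)

theorem size_dual (s : SP) : s.dual.size = s.size := by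
  induction s <;> simp [dual, size, *]

theorem le_ser (a b : SP) : (ser a b).le = sumRel True a.le b.le := by
  funext x y
  cases x <;> cases y <;> rfl

theorem le_par (a b : SP) : (par a b).le = sumRel False a.le b.le := by
  funext x y
  cases x <;> cases y <;> rfl

theorem numLE_leaf : leaf.numLE = 1 :=
  linExtCount_eq_factorial fun _ _ _ => rfl

theorem numLE_ser (a b : SP) : (ser a b).numLE = a.numLE * b.numLE := by
  rw [numLE, le_ser]
  exact linExtCount_sumRel_true

theorem numLE_par (a b : SP) :
    (par a b).numLE = (a.size + b.size).choose b.size * (a.numLE * b.numLE) := by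
  rw [numLE, le_par, ← a.card_carrier, ← b.card_carrier]
  exact linExtCount_sumRel_false

end SP

/-- For an SP-expression on `n` variables, the number of linear extensions of the
generated order times the number of linear extensions of the dual order equals `n!`. -/
theorem sp_dual_linext_product (Ψ : SP) (n : ℕ) (hn : n = Ψ.size) :
    Ψ.numLE * Ψ.dual.numLE = n.factorial := by
  subst hn
  induction Ψ with
  | leaf => simp [SP.dual, SP.numLE_leaf, SP.size]
  | ser a b iha ihb =>
    rw [SP.dual, SP.numLE_ser, SP.numLE_par, a.size_dual, b.size_dual, SP.size,
      ← Nat.add_choose_mul_factorial_mul_factorial, ← iha, ← ihb]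
    ring
  | par a b iha ihb =>
    rw [SP.dual, SP.numLE_par, SP.numLE_ser, SP.size,
      ← Nat.add_choose_mul_factorial_mul_factorial, ← iha, ← ihb]
    ring
end

section
/- For an SP-expression Ψ on n variables generating poset α with dual poset α*, two distinct elements are comparable in α if and only if they are incomparable in α*. In particular, the comparability graph of α* is the complement of the comparability graph of α. -/
open Relation

namespace SP

theorem symmGen_le_ser_inl_inr {a b : SP} (x : a.carrier) (y : b.carrier) :
    SymmGen (ser a b).le (.inl x) (.inr y) :=
  .of_rel trivial

theorem not_symmGen_le_par_inl_inr {a b : SP} (x : a.carrier) (y : b.carrier) :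
    ¬SymmGen (par a b).le (.inl x) (.inr y) :=
  fun h => h.elim id id

theorem symmGen_le_iff_not_symmGen_dual_le :
    ∀ (s : SP) {x y : s.carrier}, x ≠ y →
      (SymmGen s.le x y ↔ ¬SymmGen s.dual.le (s.dualEquiv x) (s.dualEquiv y))
  | leaf, .unit, .unit, hxy => absurd rfl hxy
  | ser a _, .inl _, .inl _, hxy => symmGen_le_iff_not_symmGen_dual_le a (hxy <| congrArg _ ·)
  | ser _ b, .inr _, .inr _, hxy => symmGen_le_iff_not_symmGen_dual_le b (hxy <| congrArg _ ·)
  | ser _ _, .inl x, .inr y, _ =>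
      iff_of_true (symmGen_le_ser_inl_inr x y) (not_symmGen_le_par_inl_inr _ _)
  | ser _ _, .inr x, .inl y, _ =>
      iff_of_true (symmGen_le_ser_inl_inr y x).symm (not_symmGen_le_par_inl_inr _ _ ·.symm)
  | par a _, .inl _, .inl _, hxy => symmGen_le_iff_not_symmGen_dual_le a (hxy <| congrArg _ ·)
  | par _ b, .inr _, .inr _, hxy => symmGen_le_iff_not_symmGen_dual_le b (hxy <| congrArg _ ·)
  | par _ _, .inl x, .inr y, _ =>
      iff_of_false (not_symmGen_le_par_inl_inr x y) (not_not_intro (symmGen_le_ser_inl_inr _ _))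
  | par _ _, .inr x, .inl y, _ =>
      iff_of_false (not_symmGen_le_par_inl_inr y x ·.symm)
        (not_not_intro (symmGen_le_ser_inl_inr _ _).symm)

end SP

/-- Two distinct elements are comparable in the order generated by an SP-expression iff
they are incomparable in the dual order: the comparability graph of the dual is the
complement of the comparability graph of the original. -/
theorem sp_dual_comparability_complement (Ψ : SP) (x y : Ψ.carrier) (hxy : x ≠ y) :
    (Ψ.le x y ∨ Ψ.le y x) ↔
      ¬(Ψ.dual.le (Ψ.dualEquiv x) (Ψ.dualEquiv y) ∨
        Ψ.dual.le (Ψ.dualEquiv y) (Ψ.dualEquiv x)) :=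
  Ψ.symmGen_le_iff_not_symmGen_dual_le hxy
end

section
/- Every poset generated by an SP-expression is N-free: it contains no four elements x, y, u, v with x ⊑ y, u ⊑ v, x ⊑ v, where u and y are incomparable, x and u are incomparable, and y and v are incomparable. -/
/-- Strict order generated by an SP-expression. -/
def SP.lt (s : SP) (x y : s.carrier) : Prop := s.le x y ∧ x ≠ y

/-- Incomparability in the order generated by an SP-expression. -/
def SP.incomp (s : SP) (x y : s.carrier) : Prop := ¬ s.le x y ∧ ¬ s.le y x

/-
In a series composition elements of different components are comparable, and in a parallel
composition they are incomparable. The incomparable pairs `x–u–y–v` of an `N` form a path, so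
in `a ⊗ b` the whole `N` lies in one component; dually, the comparable pairs `y–x–v–u` form a
path, so the same holds in `a ∥ b`. Each component is a suborder, so induction on the
expression applies.
-/

namespace SP

def IsN (s : SP) (x y u v : s.carrier) : Prop :=
  s.lt x y ∧ s.lt u v ∧ s.lt x v ∧ s.incomp u y ∧ s.incomp x u ∧ s.incomp y v

def HasN (s : SP) : Prop := ∃ x y u v : s.carrier, s.IsN x y u v

theorem IsN.comap {s t : SP} {f : t.carrier → s.carrier}
    (hf : ∀ x y, s.le (f x) (f y) ↔ t.le x y) {x y u v : t.carrier}
    (h : s.IsN (f x) (f y) (f u) (f v)) : t.IsN x y u v := by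
  obtain ⟨hxy, huv, hxv, huy, hxu, hyv⟩ := h
  simp only [IsN, lt, incomp, hf] at *
  exact ⟨⟨hxy.1, fun h => hxy.2 (congrArg f h)⟩, ⟨huv.1, fun h => huv.2 (congrArg f h)⟩,
    ⟨hxv.1, fun h => hxv.2 (congrArg f h)⟩, huy, hxu, hyv⟩

theorem not_hasN_leaf : ¬ leaf.HasN :=
  fun ⟨_, _, _, _, _, _, _, _, hxu, _⟩ => hxu.1 trivial

theorem isLeft_eq_of_incomp_ser {a b : SP} {p q : (ser a b).carrier}
    (h : (ser a b).incomp p q) : p.isLeft = q.isLeft := by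
  rcases p with p | p <;> rcases q with q | q
  all_goals first | rfl | exact (h.1 trivial).elim | exact (h.2 trivial).elim

theorem isLeft_eq_of_le_par {a b : SP} {p q : (par a b).carrier}
    (h : (par a b).le p q) : p.isLeft = q.isLeft := by
  rcases p with p | p <;> rcases q with q | q
  all_goals first | rfl | exact h.elim

theorem hasN_ser {a b : SP} (h : (ser a b).HasN) : a.HasN ∨ b.HasN := by
  obtain ⟨x, y, u, v, hN⟩ := h
  have hxu := isLeft_eq_of_incomp_ser hN.2.2.2.2.1
  have huy := isLeft_eq_of_incomp_ser hN.2.2.2.1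
  have hyv := isLeft_eq_of_incomp_ser hN.2.2.2.2.2
  rcases x with x | x <;> rcases y with y | y <;> rcases u with u | u <;> rcases v with v | v <;>
    simp only [Sum.isLeft_inl, Sum.isLeft_inr, reduceCtorEq] at hxu huy hyv
  · exact .inl ⟨x, y, u, v, IsN.comap (s := ser a b) (f := Sum.inl) (fun _ _ => Iff.rfl) hN⟩
  · exact .inr ⟨x, y, u, v, IsN.comap (s := ser a b) (f := Sum.inr) (fun _ _ => Iff.rfl) hN⟩

theorem hasN_par {a b : SP} (h : (par a b).HasN) : a.HasN ∨ b.HasN := by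
  obtain ⟨x, y, u, v, hN⟩ := h
  have hxy := isLeft_eq_of_le_par hN.1.1
  have huv := isLeft_eq_of_le_par hN.2.1.1
  have hxv := isLeft_eq_of_le_par hN.2.2.1.1
  rcases x with x | x <;> rcases y with y | y <;> rcases u with u | u <;> rcases v with v | v <;>
    simp only [Sum.isLeft_inl, Sum.isLeft_inr, reduceCtorEq] at hxy huv hxv
  · exact .inl ⟨x, y, u, v, IsN.comap (s := par a b) (f := Sum.inl) (fun _ _ => Iff.rfl) hN⟩
  · exact .inr ⟨x, y, u, v, IsN.comap (s := par a b) (f := Sum.inr) (fun _ _ => Iff.rfl) hN⟩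

end SP

/-- Every SP-order is N-free: it contains no four elements `x, y, u, v` with
`x < y`, `u < v`, `x < v`, where `u,y`, `x,u` and `y,v` are incomparable. -/
theorem sp_N_free (Ψ : SP) :
    ¬ ∃ x y u v : Ψ.carrier,
        Ψ.lt x y ∧ Ψ.lt u v ∧ Ψ.lt x v ∧
        Ψ.incomp u y ∧ Ψ.incomp x u ∧ Ψ.incomp y v := by
  induction Ψ with
  | leaf => exact SP.not_hasN_leaf
  | ser a b iha ihb => exact fun h => (SP.hasN_ser h).elim iha ihb
  | par a b iha ihb => exact fun h => (SP.hasN_par h).elim iha ihb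
end

section
/- For any finite poset α of size n, if β is a poset on the same n elements whose strict comparability relation is the complement of that of α, and such that both α and β are SP-orders arising from dual SP-expressions, then every permutation of the n elements is realized exactly once as a pair of ranks compatible with (α, β); equivalently, |LE(α)| · |LE(β)| = n!. -/
section AuxProofs
open Finset


lemma card_linext_sum_ser {A B : Type} [Fintype A] [Fintype B]
    (la : A → A → Prop) (lb : B → B → Prop) (R : A ⊕ B → A ⊕ B → Prop)
    (hll : ∀ x y, R (.inl x) (.inl y) ↔ la x y)
    (hrr : ∀ x y, R (.inr x) (.inr y) ↔ lb x y)
    (hlr : ∀ x y, R (.inl x) (.inr y))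
    (hrl : ∀ x y, ¬ R (.inr x) (.inl y)) :
    Nat.card {f : A ⊕ B ≃ Fin (Fintype.card (A ⊕ B)) // ∀ x y, R x y → x ≠ y → f x < f y}
    = Nat.card {f : A ≃ Fin (Fintype.card A) // ∀ x y, la x y → x ≠ y → f x < f y}
    * Nat.card {f : B ≃ Fin (Fintype.card B) // ∀ x y, lb x y → x ≠ y → f x < f y} := by
  set m := Fintype.card A with hm
  set k := Fintype.card B with hk
  have hn : Fintype.card (A ⊕ B) = m + k := Fintype.card_sum
  rw [← Nat.card_prod]
  apply Nat.card_congr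
  apply Equiv.symm
  refine Equiv.ofBijective (fun p =>
    ⟨(Equiv.sumCongr p.1.1 p.2.1).trans (finSumFinEquiv.trans (finCongr hn.symm)), ?_⟩) ⟨?_, ?_⟩
  · obtain ⟨⟨g, hg⟩, ⟨h, hh⟩⟩ := p
    rintro (a | b) (a' | b') hR hne
    · have hgl : g a < g a' := hg a a' ((hll a a').mp hR) (fun he => hne (by rw [he]))
      simp only [Equiv.trans_apply, Equiv.sumCongr_apply, Sum.map_inl,
        finSumFinEquiv_apply_left, finCongr_apply, Fin.lt_def, Fin.coe_cast, Fin.coe_castAdd]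
      exact hgl
    · have hga : (g a).val < m := (g a).isLt
      simp only [Equiv.trans_apply, Equiv.sumCongr_apply, Sum.map_inl, Sum.map_inr,
        finSumFinEquiv_apply_left, finSumFinEquiv_apply_right, finCongr_apply, Fin.lt_def,
        Fin.coe_cast, Fin.coe_castAdd, Fin.coe_natAdd]
      omega
    · exact absurd hR (hrl b a')
    · have hhl : h b < h b' := hh b b' ((hrr b b').mp hR) (fun he => hne (by rw [he]))
      simp only [Equiv.trans_apply, Equiv.sumCongr_apply, Sum.map_inr,
        finSumFinEquiv_apply_right, finCongr_apply, Fin.lt_def, Fin.coe_cast, Fin.coe_natAdd]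
      omega
  · intro p q heq
    have heq2 : ∀ x, ((Equiv.sumCongr p.1.1 p.2.1).trans (finSumFinEquiv.trans (finCongr hn.symm))) x
        = ((Equiv.sumCongr q.1.1 q.2.1).trans (finSumFinEquiv.trans (finCongr hn.symm))) x :=
      fun x => Equiv.ext_iff.mp (congrArg Subtype.val heq) x
    have hga : ∀ a, p.1.1 a = q.1.1 a := by
      intro a
      have hv := congrArg Fin.val (heq2 (.inl a))
      simp only [Equiv.trans_apply, Equiv.sumCongr_apply, Sum.map_inl,
        finSumFinEquiv_apply_left, finCongr_apply, Fin.coe_cast, Fin.coe_castAdd] at hv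
      exact Fin.ext hv
    have hhb : ∀ b, p.2.1 b = q.2.1 b := by
      intro b
      have hv := congrArg Fin.val (heq2 (.inr b))
      simp only [Equiv.trans_apply, Equiv.sumCongr_apply, Sum.map_inr,
        finSumFinEquiv_apply_right, finCongr_apply, Fin.coe_cast, Fin.coe_natAdd] at hv
      exact Fin.ext (by omega)
    exact Prod.ext (Subtype.ext (Equiv.ext hga)) (Subtype.ext (Equiv.ext hhb))
  · rintro ⟨f, hf⟩
    have claimA : ∀ a, (f (.inl a)).val < m := by
      intro a
      have himg : (univ.image fun b => f (.inr b)) ⊆ Finset.Ioi (f (.inl a)) := by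
        intro i hi
        simp only [mem_image, mem_univ, true_and] at hi
        obtain ⟨b, rfl⟩ := hi
        exact Finset.mem_Ioi.mpr (hf _ _ (hlr a b) (by simp))
      have hk2 : k ≤ (Finset.Ioi (f (.inl a))).card := by
        have hc : (univ.image fun b => f (.inr b)).card = k := by
          rw [card_image_of_injective univ
            (show Function.Injective fun b => f (Sum.inr b) from
              fun x y hxy => Sum.inr_injective (f.injective hxy)), card_univ]
        rw [← hc]; exact card_le_card himg
      rw [Fin.card_Ioi] at hk2
      have := (f (.inl a)).isLt
      omega
    have claimB : ∀ b, m ≤ (f (.inr b)).val := by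
      intro b
      have himg : (univ.image fun a => f (.inl a)) ⊆ Finset.Iio (f (.inr b)) := by
        intro i hi
        simp only [mem_image, mem_univ, true_and] at hi
        obtain ⟨a, rfl⟩ := hi
        exact Finset.mem_Iio.mpr (hf _ _ (hlr a b) (by simp))
      have hk2 : m ≤ (Finset.Iio (f (.inr b))).card := by
        have hc : (univ.image fun a => f (.inl a)).card = m := by
          rw [card_image_of_injective univ
            (show Function.Injective fun a => f (Sum.inl a) from
              fun x y hxy => Sum.inl_injective (f.injective hxy)), card_univ]
        rw [← hc]; exact card_le_card himg
      rw [Fin.card_Iio] at hk2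
      exact hk2
    have ginj : Function.Injective (fun a => (⟨(f (.inl a)).val, claimA a⟩ : Fin m)) := by
      intro a a' he
      have hv : f (.inl a) = f (.inl a') := Fin.ext (by simpa using congrArg Fin.val he)
      exact Sum.inl_injective (f.injective hv)
    have gbij := (Fintype.bijective_iff_injective_and_card _).mpr ⟨ginj, by simp [hm]⟩
    have hinj : Function.Injective (fun b =>
        (⟨(f (.inr b)).val - m, by have := (f (.inr b)).isLt; have := claimB b; omega⟩ : Fin k)) := by
      intro b b' he
      have hv := congrArg Fin.val he
      simp only at hv
      have h1 := claimB b; have h2 := claimB b'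
      have hv2 : f (.inr b) = f (.inr b') := Fin.ext (by omega)
      exact Sum.inr_injective (f.injective hv2)
    have hbij := (Fintype.bijective_iff_injective_and_card _).mpr ⟨hinj, by simp [hk]⟩
    refine ⟨⟨⟨Equiv.ofBijective _ gbij, ?_⟩, ⟨Equiv.ofBijective _ hbij, ?_⟩⟩, ?_⟩
    · intro a a' hla hne
      show (f (.inl a)).val < (f (.inl a')).val
      exact hf (.inl a) (.inl a') ((hll a a').mpr hla) (fun he => hne (by injection he))
    · intro b b' hlb hne
      have hlt : (f (.inr b)).val < (f (.inr b')).val :=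
        hf (.inr b) (.inr b') ((hrr b b').mpr hlb) (fun he => hne (by injection he))
      have h1 := claimB b; have h2 := claimB b'
      show (f (.inr b)).val - m < (f (.inr b')).val - m
      omega
    · apply Subtype.ext
      apply Equiv.ext
      rintro (a | b) <;> apply Fin.ext
      · rfl
      · have := claimB b
        show m + ((f (.inr b)).val - m) = (f (.inr b)).val
        omega


lemma orderIsoOfFin_coe_congr {α : Type*} [LinearOrder α] {s t : Finset α} (hst : s = t)
    {k : ℕ} (hs : s.card = k) (ht : t.card = k) (i : Fin k) :
    (s.orderIsoOfFin hs i : α) = t.orderIsoOfFin ht i := by subst hst; rfl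

lemma card_linext_sum_par {A B : Type} [Fintype A] [Fintype B]
    (la : A → A → Prop) (lb : B → B → Prop) (R : A ⊕ B → A ⊕ B → Prop)
    (hll : ∀ x y, R (.inl x) (.inl y) ↔ la x y)
    (hrr : ∀ x y, R (.inr x) (.inr y) ↔ lb x y)
    (hlr : ∀ x y, ¬ R (.inl x) (.inr y))
    (hrl : ∀ x y, ¬ R (.inr x) (.inl y)) :
    Nat.card {f : A ⊕ B ≃ Fin (Fintype.card (A ⊕ B)) // ∀ x y, R x y → x ≠ y → f x < f y}
    = Nat.card {f : A ≃ Fin (Fintype.card A) // ∀ x y, la x y → x ≠ y → f x < f y}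
    * Nat.card {f : B ≃ Fin (Fintype.card B) // ∀ x y, lb x y → x ≠ y → f x < f y}
    * (Fintype.card A + Fintype.card B).choose (Fintype.card A) := by
  set m := Fintype.card A with hm
  set k := Fintype.card B with hk
  set n := Fintype.card (A ⊕ B) with hnd
  have hn : n = m + k := Fintype.card_sum
  have hcompl : ∀ (s : Finset (Fin n)), s.card = m → sᶜ.card = k := by
    intro s hs
    rw [card_compl, hs, Fintype.card_fin]
    omega
  -- the underlying function of the backward map
  set Emap : ({f : A ≃ Fin m // ∀ x y, la x y → x ≠ y → f x < f y}
      × {f : B ≃ Fin k // ∀ x y, lb x y → x ≠ y → f x < f y}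
      × {s : Finset (Fin n) // s.card = m}) → (A ⊕ B) → Fin n :=
    fun p => Sum.elim (fun a => ((p.2.2.1.orderIsoOfFin p.2.2.2) (p.1.1 a) : Fin n))
      (fun b => (((p.2.2.1)ᶜ.orderIsoOfFin (hcompl _ p.2.2.2)) (p.2.1.1 b) : Fin n)) with hE
  have Einj : ∀ p, Function.Injective (Emap p) := by
    rintro p (a | b) (a' | b') he
    · have := (p.2.2.1.orderIsoOfFin p.2.2.2).injective (Subtype.ext he)
      exact congrArg Sum.inl (p.1.1.injective this)
    · exfalso
      have h1 : Emap p (.inl a) ∈ p.2.2.1 := (p.2.2.1.orderIsoOfFin p.2.2.2 (p.1.1 a)).2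
      have h2 : Emap p (.inr b') ∈ (p.2.2.1)ᶜ := ((p.2.2.1)ᶜ.orderIsoOfFin _ (p.2.1.1 b')).2
      rw [he] at h1
      exact (mem_compl.mp h2) h1
    · exfalso
      have h1 : Emap p (.inl a') ∈ p.2.2.1 := (p.2.2.1.orderIsoOfFin p.2.2.2 (p.1.1 a')).2
      have h2 : Emap p (.inr b) ∈ (p.2.2.1)ᶜ := ((p.2.2.1)ᶜ.orderIsoOfFin _ (p.2.1.1 b)).2
      rw [← he] at h1
      exact (mem_compl.mp h2) h1
    · have := ((p.2.2.1)ᶜ.orderIsoOfFin _).injective (Subtype.ext he)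
      exact congrArg Sum.inr (p.2.1.1.injective this)
  have Ebij : ∀ p, Function.Bijective (Emap p) :=
    fun p => (Fintype.bijective_iff_injective_and_card _).mpr ⟨Einj p, by simp; omega⟩
  have hchoose : (m + k).choose m = Nat.card {s : Finset (Fin n) // s.card = m} := by
    rw [Nat.card_eq_fintype_card, Fintype.card_finset_len, Fintype.card_fin, hn]
  rw [hchoose, mul_assoc, ← Nat.card_prod, ← Nat.card_prod]
  apply Nat.card_congr
  apply Equiv.symm
  refine Equiv.ofBijective (fun p => ⟨Equiv.ofBijective _ (Ebij p), ?_⟩) ⟨?_, ?_⟩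
  · rintro (a | b) (a' | b') hR hne
    · have hlt : p.1.1 a < p.1.1 a' := p.1.2 a a' ((hll a a').mp hR) (fun he => hne (by rw [he]))
      show ((p.2.2.1.orderIsoOfFin p.2.2.2) (p.1.1 a) : Fin n)
        < ((p.2.2.1.orderIsoOfFin p.2.2.2) (p.1.1 a') : Fin n)
      exact Subtype.coe_lt_coe.mpr ((p.2.2.1.orderIsoOfFin p.2.2.2).lt_iff_lt.mpr hlt)
    · exact absurd hR (hlr a b')
    · exact absurd hR (hrl b a')
    · have hlt : p.2.1.1 b < p.2.1.1 b' := p.2.1.2 b b' ((hrr b b').mp hR) (fun he => hne (by rw [he]))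
      show (((p.2.2.1)ᶜ.orderIsoOfFin (hcompl _ p.2.2.2)) (p.2.1.1 b) : Fin n)
        < (((p.2.2.1)ᶜ.orderIsoOfFin (hcompl _ p.2.2.2)) (p.2.1.1 b') : Fin n)
      exact Subtype.coe_lt_coe.mpr (((p.2.2.1)ᶜ.orderIsoOfFin _).lt_iff_lt.mpr hlt)
  · -- injective
    intro p q heq
    have heq2 : ∀ x, Emap p x = Emap q x := by
      intro x
      have := congrArg Subtype.val heq
      exact Equiv.ext_iff.mp this x
    have key : ∀ r i, i ∈ r.2.2.1 ↔ ∃ a : A, Emap r (.inl a) = i := by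
      intro r i
      constructor
      · intro hi
        refine ⟨r.1.1.symm ((r.2.2.1.orderIsoOfFin r.2.2.2).symm ⟨i, hi⟩), ?_⟩
        show ((r.2.2.1.orderIsoOfFin r.2.2.2) (r.1.1 _) : Fin n) = i
        rw [Equiv.apply_symm_apply, OrderIso.apply_symm_apply]
      · rintro ⟨a, rfl⟩
        exact ((r.2.2.1.orderIsoOfFin r.2.2.2) (r.1.1 a)).2
    have hs : p.2.2.1 = q.2.2.1 := by
      ext i
      rw [key p i, key q i]
      exact exists_congr (fun a => by rw [heq2])
    have hg : ∀ a, p.1.1 a = q.1.1 a := by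
      intro a
      have h1 := heq2 (.inl a)
      have h2 : ((q.2.2.1.orderIsoOfFin q.2.2.2) (p.1.1 a) : Fin n)
          = ((q.2.2.1.orderIsoOfFin q.2.2.2) (q.1.1 a) : Fin n) := by
        rw [← orderIsoOfFin_coe_congr hs p.2.2.2 q.2.2.2 (p.1.1 a)]
        exact h1
      exact (q.2.2.1.orderIsoOfFin q.2.2.2).injective (Subtype.ext h2)
    have hh : ∀ b, p.2.1.1 b = q.2.1.1 b := by
      intro b
      have h1 := heq2 (.inr b)
      have h2 : (((q.2.2.1)ᶜ.orderIsoOfFin (hcompl _ q.2.2.2)) (p.2.1.1 b) : Fin n)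
          = (((q.2.2.1)ᶜ.orderIsoOfFin (hcompl _ q.2.2.2)) (q.2.1.1 b) : Fin n) := by
        rw [← orderIsoOfFin_coe_congr (congrArg compl hs) (hcompl _ p.2.2.2)
          (hcompl _ q.2.2.2) (p.2.1.1 b)]
        exact h1
      exact ((q.2.2.1)ᶜ.orderIsoOfFin _).injective (Subtype.ext h2)
    exact Prod.ext (Subtype.ext (Equiv.ext hg))
      (Prod.ext (Subtype.ext (Equiv.ext hh)) (Subtype.ext hs))
  · -- surjective
    rintro ⟨f, hf⟩
    set s : Finset (Fin n) := univ.image (fun a => f (.inl a)) with hsdef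
    have hs : s.card = m := by
      rw [hsdef, card_image_of_injective univ
        (show Function.Injective fun a => f (Sum.inl a) from
          fun x y hxy => Sum.inl_injective (f.injective hxy)), card_univ]
    have memS : ∀ a, f (.inl a) ∈ s := fun a => mem_image.mpr ⟨a, mem_univ a, rfl⟩
    have memC : ∀ b, f (.inr b) ∈ sᶜ := by
      intro b
      rw [mem_compl, hsdef, mem_image]
      rintro ⟨a, -, ha⟩
      exact (by simp : (Sum.inl a : A ⊕ B) ≠ .inr b) (f.injective ha)
    have ginj : Function.Injective
        (fun a => (s.orderIsoOfFin hs).symm ⟨f (.inl a), memS a⟩) := by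
      intro a a' he
      have := congrArg (s.orderIsoOfFin hs) he
      rw [OrderIso.apply_symm_apply, OrderIso.apply_symm_apply] at this
      exact Sum.inl_injective (f.injective (congrArg Subtype.val this))
    have gbij := (Fintype.bijective_iff_injective_and_card _).mpr ⟨ginj, by simp [hm]⟩
    have hinj : Function.Injective
        (fun b => (sᶜ.orderIsoOfFin (hcompl s hs)).symm ⟨f (.inr b), memC b⟩) := by
      intro b b' he
      have := congrArg (sᶜ.orderIsoOfFin (hcompl s hs)) he
      rw [OrderIso.apply_symm_apply, OrderIso.apply_symm_apply] at this
      exact Sum.inr_injective (f.injective (congrArg Subtype.val this))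
    have hbij := (Fintype.bijective_iff_injective_and_card _).mpr ⟨hinj, by simp [hk]⟩
    refine ⟨⟨⟨Equiv.ofBijective _ gbij, ?_⟩, ⟨Equiv.ofBijective _ hbij, ?_⟩, ⟨s, hs⟩⟩, ?_⟩
    · intro a a' hla hne
      have hlt : f (.inl a) < f (.inl a') :=
        hf _ _ ((hll a a').mpr hla) (fun he => hne (by injection he))
      show (s.orderIsoOfFin hs).symm ⟨f (.inl a), memS a⟩
        < (s.orderIsoOfFin hs).symm ⟨f (.inl a'), memS a'⟩
      exact (s.orderIsoOfFin hs).symm.lt_iff_lt.mpr (Subtype.mk_lt_mk.mpr hlt)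
    · intro b b' hlb hne
      have hlt : f (.inr b) < f (.inr b') :=
        hf _ _ ((hrr b b').mpr hlb) (fun he => hne (by injection he))
      show (sᶜ.orderIsoOfFin (hcompl s hs)).symm ⟨f (.inr b), memC b⟩
        < (sᶜ.orderIsoOfFin (hcompl s hs)).symm ⟨f (.inr b'), memC b'⟩
      exact (sᶜ.orderIsoOfFin (hcompl s hs)).symm.lt_iff_lt.mpr (Subtype.mk_lt_mk.mpr hlt)
    · apply Subtype.ext
      apply Equiv.ext
      rintro (a | b)
      · show ((s.orderIsoOfFin hs) ((s.orderIsoOfFin hs).symm ⟨f (.inl a), memS a⟩) : Fin n)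
          = f (.inl a)
        rw [OrderIso.apply_symm_apply]
      · show ((sᶜ.orderIsoOfFin (hcompl s hs))
            ((sᶜ.orderIsoOfFin (hcompl s hs)).symm ⟨f (.inr b), memC b⟩) : Fin n) = f (.inr b)
        rw [OrderIso.apply_symm_apply]

lemma linExtCount_congr {X Y : Type} [Fintype X] [Fintype Y] (lx : X → X → Prop)
    (ly : Y → Y → Prop) (e : X ≃ Y) (h : ∀ x y, lx x y ↔ ly (e x) (e y)) :
    linExtCount X lx = linExtCount Y ly := by
  have hc : Fintype.card X = Fintype.card Y := Fintype.card_congr e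
  apply Nat.card_congr
  refine Equiv.subtypeEquiv (Equiv.equivCongr e (finCongr hc)) (fun f => ?_)
  have key : ∀ x y : Y, (Equiv.equivCongr e (finCongr hc) f) x < (Equiv.equivCongr e (finCongr hc) f) y ↔ f (e.symm x) < f (e.symm y) := by
    intro x y
    simp only [Equiv.equivCongr_apply_apply, finCongr_apply, Fin.lt_def, Fin.coe_cast]
  constructor
  · intro hf x y hxy hne
    refine (key x y).mpr (hf (e.symm x) (e.symm y) ?_ (fun hh => hne ?_))
    · rw [h]; simpa using hxy
    · have := congrArg e hh; simpa using this
  · intro hf x y hxy hne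
    have h1 := hf (e x) (e y) ((h x y).mp hxy) (fun hh => hne (e.injective hh))
    have k2 := key (e x) (e y)
    simp only [Equiv.symm_apply_apply] at k2
    exact k2.mp h1

lemma SP.card_carrier_s17 (s : SP) : Fintype.card s.carrier = s.size := by
  induction s with
  | leaf => rfl
  | ser a b iha ihb =>
      have h0 : Fintype.card (SP.ser a b).carrier = Fintype.card (a.carrier ⊕ b.carrier) :=
        Fintype.card_congr (Equiv.refl _)
      rw [h0, Fintype.card_sum, iha, ihb]; rfl
  | par a b iha ihb =>
      have h0 : Fintype.card (SP.par a b).carrier = Fintype.card (a.carrier ⊕ b.carrier) :=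
        Fintype.card_congr (Equiv.refl _)
      rw [h0, Fintype.card_sum, iha, ihb]; rfl

lemma SP.size_dual_s17 (s : SP) : s.dual.size = s.size := by
  induction s <;> simp [SP.dual, SP.size, *]

lemma SP.numLE_leaf_s17 : SP.numLE .leaf = 1 := by
  rw [SP.numLE, linExtCount, Nat.card_eq_one_iff_unique]
  haveI : Subsingleton SP.leaf.carrier := inferInstanceAs (Subsingleton Unit)
  constructor
  · constructor
    intro f g
    apply Subtype.ext; apply Equiv.ext; intro x
    apply Fin.ext
    have h1 := (f.1 x).isLt
    have h2 := (g.1 x).isLt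
    have hc : Fintype.card SP.leaf.carrier = 1 := rfl
    omega
  · exact ⟨⟨Fintype.equivFin _, fun x y _ hne => absurd (Subsingleton.elim x y) hne⟩⟩

lemma SP.numLE_ser_s17 (a b : SP) : (SP.ser a b).numLE = a.numLE * b.numLE :=
  card_linext_sum_ser a.le b.le (SP.ser a b).le (fun _ _ => Iff.rfl) (fun _ _ => Iff.rfl)
    (fun _ _ => trivial) (fun _ _ h => h)

lemma SP.numLE_par_s17 (a b : SP) :
    (SP.par a b).numLE = a.numLE * b.numLE * ((a.size + b.size).choose a.size) := by
  rw [← a.card_carrier_s17, ← b.card_carrier_s17]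
  exact card_linext_sum_par a.le b.le (SP.par a b).le (fun _ _ => Iff.rfl) (fun _ _ => Iff.rfl)
    (fun _ _ h => h) (fun _ _ h => h)

lemma SP.numLE_mul_dual (s : SP) : s.numLE * s.dual.numLE = (s.size).factorial := by
  induction s with
  | leaf =>
      rw [show SP.leaf.dual = SP.leaf from rfl, SP.numLE_leaf_s17]
      rfl
  | ser a b iha ihb =>
      rw [show (SP.ser a b).dual = SP.par a.dual b.dual from rfl, SP.numLE_ser_s17, SP.numLE_par_s17,
        a.size_dual_s17, b.size_dual_s17]
      have h := Nat.choose_mul_factorial_mul_factorial (Nat.le_add_right a.size b.size)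
      rw [Nat.add_sub_cancel_left] at h
      calc a.numLE * b.numLE * (a.dual.numLE * b.dual.numLE * (a.size + b.size).choose a.size)
          = (a.numLE * a.dual.numLE) * (b.numLE * b.dual.numLE) * (a.size + b.size).choose a.size := by ring
        _ = a.size.factorial * b.size.factorial * (a.size + b.size).choose a.size := by rw [iha, ihb]
        _ = (a.size + b.size).choose a.size * a.size.factorial * b.size.factorial := by ring
        _ = (a.size + b.size).factorial := h
        _ = (SP.ser a b).size.factorial := rfl
  | par a b iha ihb =>
      rw [show (SP.par a b).dual = SP.ser a.dual b.dual from rfl, SP.numLE_ser_s17, SP.numLE_par_s17]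
      have h := Nat.choose_mul_factorial_mul_factorial (Nat.le_add_right a.size b.size)
      rw [Nat.add_sub_cancel_left] at h
      calc a.numLE * b.numLE * (a.size + b.size).choose a.size * (a.dual.numLE * b.dual.numLE)
          = (a.numLE * a.dual.numLE) * (b.numLE * b.dual.numLE) * (a.size + b.size).choose a.size := by ring
        _ = a.size.factorial * b.size.factorial * (a.size + b.size).choose a.size := by rw [iha, ihb]
        _ = (a.size + b.size).choose a.size * a.size.factorial * b.size.factorial := by ring
        _ = (a.size + b.size).factorial := h
        _ = (SP.par a b).size.factorial := rfl

end AuxProofs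

/-- If `α` is a finite poset of size `n`, `β` a partial order on the same `n` elements
whose strict comparability relation is the complement of that of `α`, and `α` and `β`
are SP-orders arising from dual SP-expressions, then
`|LE(α)| · |LE(β)| = n!`. -/
theorem dual_sp_orders_linext_product (X : Type) [Fintype X] (n : ℕ)
    (hn : n = Fintype.card X)
    (le₁ le₂ : X → X → Prop)
    (h₁ : IsPartialOrder X le₁) (h₂ : IsPartialOrder X le₂)
    (hcompl : ∀ x y : X, x ≠ y → ((le₁ x y ∨ le₁ y x) ↔ ¬(le₂ x y ∨ le₂ y x)))
    (Ψ : SP)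
    (e₁ : X ≃ Ψ.carrier) (he₁ : ∀ x y : X, le₁ x y ↔ Ψ.le (e₁ x) (e₁ y))
    (e₂ : X ≃ Ψ.dual.carrier) (he₂ : ∀ x y : X, le₂ x y ↔ Ψ.dual.le (e₂ x) (e₂ y)) :
    linExtCount X le₁ * linExtCount X le₂ = n.factorial := by
  have h1 : linExtCount X le₁ = Ψ.numLE := linExtCount_congr le₁ Ψ.le e₁ he₁
  have h2 : linExtCount X le₂ = Ψ.dual.numLE := linExtCount_congr le₂ Ψ.dual.le e₂ he₂
  have h3 : n = Ψ.size := by rw [hn, ← Ψ.card_carrier_s17]; exact Fintype.card_congr e₁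
  rw [h1, h2, h3, SP.numLE_mul_dual]
end

section
/- For any finite poset α of size n, the number of equivalence classes of labelings of α into the positive integers (under the relation identifying labelings with the same relative order) equals the number of linear extensions of α. -/
/-- A labeling of a finite poset `X` into a linear order `L`: an increasing
(strictly monotone) injection. -/
def IsLabeling {X L : Type} [PartialOrder X] [LinearOrder L] (l : X → L) : Prop :=
  Function.Injective l ∧ ∀ x y : X, x < y → l x < l y

/-! A labeling `l` is determined up to equivalence by its rank bijection `X ≃ Fin n`, which
sends `x` to the position of `l x` among the values of `l`: two labelings have the same rank
bijection iff they induce the same relative order. The rank bijection of a labeling is a linear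
extension, and every linear extension `f` is the rank bijection of the labeling `x ↦ f x + 1`. -/

open Function

theorem Nat.card_quot_eq_of_surjective {α β : Type*} {r : α → α → Prop} (φ : α → β)
    (hφ : Surjective φ) (hr : ∀ a b, r a b ↔ φ a = φ b) : Nat.card (Quot r) = Nat.card β := by
  obtain rfl : r = (Setoid.ker φ).r := by ext a b; exact hr a b
  exact Nat.card_congr (Setoid.quotientKerEquivOfSurjective φ hφ)

theorem Equiv.eq_of_le_iff_le {X α : Type*} [LinearOrder α] [WellFoundedLT α] {f g : X ≃ α}
    (h : ∀ x y, f x ≤ f y ↔ g x ≤ g y) : f = g := by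
  let e : α ≃o α := ⟨g.symm.trans f, fun {a b} => by simpa using h (g.symm a) (g.symm b)⟩
  ext x
  simpa [e] using congrArg (· (g x)) (Subsingleton.elim e (OrderIso.refl α))

section rankEquiv

variable {X L : Type*} [Fintype X] [LinearOrder L] {l : X → L}

noncomputable def rankEquiv (l : X → L) (hl : Injective l) : X ≃ Fin (Fintype.card X) :=
  (Equiv.ofInjective l hl).trans
    (Fintype.orderIsoFinOfCardEq (Set.range l) (Set.card_range_of_injective hl)).symm.toEquiv

theorem rankEquiv_le_iff (hl : Injective l) (x y : X) :
    rankEquiv l hl x ≤ rankEquiv l hl y ↔ l x ≤ l y :=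
  OrderIso.le_iff_le _

theorem rankEquiv_lt_iff (hl : Injective l) (x y : X) :
    rankEquiv l hl x < rankEquiv l hl y ↔ l x < l y := by
  simpa only [not_le] using (rankEquiv_le_iff hl y x).not

theorem rankEquiv_eq_of_le_iff (hl : Injective l) {f : X ≃ Fin (Fintype.card X)}
    (hf : ∀ x y, f x ≤ f y ↔ l x ≤ l y) : rankEquiv l hl = f :=
  Equiv.eq_of_le_iff_le fun x y => (rankEquiv_le_iff hl x y).trans (hf x y).symm

theorem rankEquiv_eq_rankEquiv_iff {L' : Type*} [LinearOrder L'] {l' : X → L'}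
    (hl : Injective l) (hl' : Injective l') :
    rankEquiv l hl = rankEquiv l' hl' ↔ ∀ x y, l x ≤ l y ↔ l' x ≤ l' y := by
  refine ⟨fun h x y => ?_, fun h => rankEquiv_eq_of_le_iff hl fun x y => ?_⟩
  · rw [← rankEquiv_le_iff hl, ← rankEquiv_le_iff hl', h]
  · rw [rankEquiv_le_iff, h]

end rankEquiv

theorem IsLabeling.rankEquiv_lt {X L : Type} [PartialOrder X] [Fintype X] [LinearOrder L]
    {l : X → L} (hl : IsLabeling l) {x y : X} (hxy : x ≤ y) (hne : x ≠ y) :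
    rankEquiv l hl.1 x < rankEquiv l hl.1 y :=
  (rankEquiv_lt_iff hl.1 x y).2 (hl.2 x y (hxy.lt_of_ne hne))

theorem isLabeling_succPNat_comp {X : Type} [PartialOrder X] {n : ℕ} {f : X ≃ Fin n}
    (hf : ∀ x y : X, x ≤ y → x ≠ y → f x < f y) : IsLabeling fun x => (f x : ℕ).succPNat :=
  ⟨Nat.succPNat_injective.comp (Fin.val_injective.comp f.injective),
    fun x y hxy => Nat.succPNat_lt_succPNat.2 (hf x y hxy.le hxy.ne)⟩

/-- The number of equivalence classes of labelings of a finite poset into the positive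
integers (identifying labelings with the same relative order) equals the number of
linear extensions of the poset. -/
theorem labeling_classes_eq_linext_count (X : Type) [PartialOrder X] [Fintype X] :
    Nat.card (Quot (fun l₁ l₂ : {l : X → ℕ+ // IsLabeling l} =>
        ∀ x y : X, l₁.1 x ≤ l₁.1 y ↔ l₂.1 x ≤ l₂.1 y)) =
      linExtCount X (· ≤ ·) := by
  refine Nat.card_quot_eq_of_surjective
    (fun l => ⟨rankEquiv l.1 l.2.1, fun _ _ => l.2.rankEquiv_lt⟩) ?_ fun l₁ l₂ => ?_
  · rintro ⟨f, hf⟩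
    refine ⟨⟨_, isLabeling_succPNat_comp hf⟩, Subtype.ext (rankEquiv_eq_of_le_iff _ fun x y => ?_)⟩
    simp [Nat.succPNat_le_succPNat]
  · rw [Subtype.mk.injEq, rankEquiv_eq_rankEquiv_iff]
end
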